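/- arXiv:1309.2118 — 2 statements merged into one kernel-verified Lean document; each statement's English description precedes it below -/
import Mathlib

section
/- Suppose the harmonic curvature functions H*₁,…,H*_{n-2} (defined recursively from positive curvatures k₁,…,k_{n-1} and signs εⱼ = ±1) satisfy H*_{n-2}(s) ≠ 0 for all s, and the function ε_{n-3}(H*₁)² + ε_{n-4}(H*₂)² + … + ε₀(H*_{n-2})² is a (non-zero) constant on I. Then (H*_{n-2})′ = k₁ H*_{n-3} on I. -/
/-!
Differentiating the constant sum gives `∑ ε_{n-(i+2)} H_i H_i' = 0`. Solving the recursion for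
`H_i'` (`1 ≤ i ≤ n-3`) makes this sum telescope to `ε₀ H_{n-2} (H_{n-2}' - k₁ H_{n-3})`, and
`ε₀ H_{n-2} ≠ 0`.
-/

open scoped BigOperators Topology

theorem sum_mul_mul_deriv_eq_zero_of_sum_sq_eventuallyEq {ι : Type*} (s : Finset ι)
    (w : ι → ℝ) (f : ι → ℝ → ℝ) {t c : ℝ} (hf : ∀ i ∈ s, DifferentiableAt ℝ (f i) t)
    (hc : (fun x => ∑ i ∈ s, w i * f i x ^ 2) =ᶠ[𝓝 t] fun _ => c) :
    ∑ i ∈ s, w i * f i t * deriv (f i) t = 0 := by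
  have hderiv : HasDerivAt (fun x => ∑ i ∈ s, w i * f i x ^ 2)
      (∑ i ∈ s, w i * (2 * f i t * deriv (f i) t)) t := by
    refine HasDerivAt.fun_sum fun i hi => ?_
    simpa using ((hf i hi).hasDerivAt.pow 2).const_mul (w i)
  have htwice : ∑ i ∈ s, w i * (2 * f i t * deriv (f i) t) = 0 := by
    rw [← hderiv.deriv, hc.deriv_eq, deriv_const]
  calc ∑ i ∈ s, w i * f i t * deriv (f i) t
      = 2⁻¹ * ∑ i ∈ s, w i * (2 * f i t * deriv (f i) t) := by
        rw [Finset.mul_sum]; exact Finset.sum_congr rfl fun i _ => by ring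
    _ = 0 := by rw [htwice, mul_zero]

/-- Each term `w i * h i * d i` with `i ≤ m` is `A (i-1) - A i`, where
`A i = w (i+1) κ (i+1) h i h (i+1)`, so the sum telescopes. -/
theorem sum_Icc_mul_mul_telescope (w κ h d : ℕ → ℝ) (hw : ∀ i, w i * w i = 1) (h0 : h 0 = 0)
    (m : ℕ) (hd : ∀ i, 1 ≤ i → i ≤ m →
      d i = κ i * h (i - 1) - w (i + 1) * w i * κ (i + 1) * h (i + 1)) :
    ∑ i ∈ Finset.Icc 1 (m + 1), w i * h i * d i =
      w (m + 1) * h (m + 1) * (d (m + 1) - κ (m + 1) * h m) := by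
  induction m with
  | zero => simp [h0]
  | succ m ih =>
    rw [Finset.sum_Icc_succ_top (by omega), ih fun i hi hm => hd i hi (by omega),
      hd (m + 1) (by omega) le_rfl, Nat.add_sub_cancel]
    linear_combination (-(w (m + 2) * κ (m + 2) * h (m + 1) * h (m + 2))) * hw (m + 1)

theorem eq_sub_of_eq_sub_mul_div {x a d e₁ e₂ κ : ℝ} (hκ : κ ≠ 0) (he₁ : e₁ * e₁ = 1)
    (he₂ : e₂ * e₂ = 1) (h : x = (a - d) * (e₁ * e₂ / κ)) : d = a - e₁ * e₂ * κ * x := by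
  rw [h]
  field_simp
  linear_combination (a - d) * (e₂ * e₂ * he₁ + he₂)

theorem stmt_2_general
    (n : ℕ) (hn : 3 ≤ n) (a b : ℝ)
    (k : ℕ → ℝ → ℝ) (ε : ℕ → ℝ) (H : ℕ → ℝ → ℝ)
    (hε : ∀ j, ε j = 1 ∨ ε j = -1)
    (hk : ∀ i, 1 ≤ i → i ≤ n - 1 → ∀ t ∈ Set.Ioo a b, 0 < k i t)
    (hHdiff : ∀ i, ∀ t ∈ Set.Ioo a b, DifferentiableAt ℝ (H i) t)
    (hH0 : ∀ t, H 0 t = 0)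
    (hHrec : ∀ i, 2 ≤ i → i ≤ n - 2 → ∀ t ∈ Set.Ioo a b,
      H i t = (k (n - i) t * H (i - 2) t - deriv (H (i - 1)) t) *
        (ε (n - (i + 2)) * ε (n - (i + 1)) / k (n - (i + 1)) t))
    (hHne : ∀ t ∈ Set.Ioo a b, H (n - 2) t ≠ 0)
    (c : ℝ)
    (hconst : ∀ t ∈ Set.Ioo a b,
      ∑ i ∈ Finset.Icc 1 (n - 2), ε (n - (i + 2)) * (H i t) ^ 2 = c) :
    ∀ t ∈ Set.Ioo a b, deriv (H (n - 2)) t = k 1 t * H (n - 3) t := by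
  intro t ht
  have hε2 : ∀ j, ε j * ε j = 1 := fun j => by rcases hε j with h | h <;> norm_num [h]
  have hderiv : ∀ i, 1 ≤ i → i ≤ n - 3 → deriv (H i) t = k (n - (i + 1)) t * H (i - 1) t -
      ε (n - (i + 1 + 2)) * ε (n - (i + 2)) * k (n - (i + 1 + 1)) t * H (i + 1) t := by
    intro i hi hin
    have hrec := hHrec (i + 1) (by omega) (by omega) t ht
    rw [show i + 1 - 2 = i - 1 by omega, Nat.add_sub_cancel] at hrec
    exact eq_sub_of_eq_sub_mul_div (hk _ (by omega) (by omega) t ht).ne' (hε2 _) (hε2 _) hrec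
  have hsum := sum_mul_mul_deriv_eq_zero_of_sum_sq_eventuallyEq (Finset.Icc 1 (n - 2))
    (fun i => ε (n - (i + 2))) H (fun i _ => hHdiff i t ht)
    (Filter.eventuallyEq_of_mem (isOpen_Ioo.mem_nhds ht) hconst)
  rw [show n - 2 = n - 3 + 1 by omega, sum_Icc_mul_mul_telescope _ (fun i => k (n - (i + 1)) t)
    (H · t) _ (fun i => hε2 _) (hH0 t) (n - 3) hderiv, show n - 3 + 1 = n - 2 by omega,
    show n - (n - 2 + 2) = 0 by omega, show n - (n - 2 + 1) = 1 by omega] at hsum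
  have hε0 : ε 0 ≠ 0 := left_ne_zero_of_mul_eq_one (hε2 0)
  simpa [hε0, hHne t ht, sub_eq_zero] using hsum

theorem stmt_2
    (n : ℕ) (hn : 3 ≤ n) (a b : ℝ) (hab : a < b)
    (k : ℕ → ℝ → ℝ) (ε : ℕ → ℝ) (H : ℕ → ℝ → ℝ)
    (hε : ∀ j, ε j = 1 ∨ ε j = -1)
    (hk : ∀ i, 1 ≤ i → i ≤ n - 1 → ∀ t ∈ Set.Ioo a b, 0 < k i t)
    (hksmooth : ∀ i, ContDiffOn ℝ (⊤ : ℕ∞) (k i) (Set.Ioo a b))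
    (hHdiff : ∀ i, ∀ t ∈ Set.Ioo a b, DifferentiableAt ℝ (H i) t)
    (hH0 : ∀ t, H 0 t = 0)
    (hH1 : ∀ t ∈ Set.Ioo a b, H 1 t = ε (n - 3) * ε (n - 2) * (k (n - 1) t / k (n - 2) t))
    (hHrec : ∀ i, 2 ≤ i → i ≤ n - 2 → ∀ t ∈ Set.Ioo a b,
      H i t = (k (n - i) t * H (i - 2) t - deriv (H (i - 1)) t) *
        (ε (n - (i + 2)) * ε (n - (i + 1)) / k (n - (i + 1)) t))
    (hHne : ∀ t ∈ Set.Ioo a b, H (n - 2) t ≠ 0)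
    (c : ℝ) (hc : c ≠ 0)
    (hconst : ∀ t ∈ Set.Ioo a b,
      ∑ i ∈ Finset.Icc 1 (n - 2), ε (n - (i + 2)) * (H i t) ^ 2 = c) :
    ∀ t ∈ Set.Ioo a b, deriv (H (n - 2)) t = k 1 t * H (n - 3) t :=
  stmt_2_general n hn a b k ε H hε hk hHdiff hH0 hHrec hHne c hconst
end

section
/- Let k₁,…,k_{n-1} : I → ℝ be smooth positive functions on an interval and ε₀,…,ε_{n-1} ∈ {1,−1}. Define H*ᵢ recursively as in the paper. Then the sum S = Σ_{i=1}^{n-2} ε_{n-(i+2)} H*ᵢ (H*ᵢ)′ telescopes: S = ε₀ H*_{n-2}( (H*_{n-2})′ − k₁ H*_{n-3} ). In particular S ≡ 0 if and only if H*_{n-2}·((H*_{n-2})′ − k₁H*_{n-3}) ≡ 0. -/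
open scoped BigOperators

private lemma tele_aux (f g : ℕ → ℝ) (m : ℕ)
    (h : ∀ j, 1 ≤ j → j ≤ m → f j = g j - g (j + 1)) :
    ∑ j ∈ Finset.Icc 1 m, f j = g 1 - g (m + 1) := by
  induction m with
  | zero => simp
  | succ m ih =>
    rw [Finset.sum_Icc_succ_top (Nat.succ_le_succ (Nat.zero_le m)),
      ih (fun j hj hjm => h j hj (hjm.trans (Nat.le_succ m))),
      h (m + 1) (Nat.succ_le_succ (Nat.zero_le m)) le_rfl]
    ring

theorem stmt_12
    (n : ℕ) (hn : 3 ≤ n) (a b : ℝ) (hab : a < b)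
    (k : ℕ → ℝ → ℝ) (ε : ℕ → ℝ) (H : ℕ → ℝ → ℝ)
    (hε : ∀ j, ε j = 1 ∨ ε j = -1)
    (hk : ∀ i, 1 ≤ i → i ≤ n - 1 → ∀ t ∈ Set.Ioo a b, 0 < k i t)
    (hksmooth : ∀ i, ContDiffOn ℝ (⊤ : ℕ∞) (k i) (Set.Ioo a b))
    (hHdiff : ∀ i, ∀ t ∈ Set.Ioo a b, DifferentiableAt ℝ (H i) t)
    (hH0 : ∀ t, H 0 t = 0)
    (hH1 : ∀ t ∈ Set.Ioo a b, H 1 t = ε (n - 3) * ε (n - 2) * (k (n - 1) t / k (n - 2) t))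
    (hHrec : ∀ i, 2 ≤ i → i ≤ n - 2 → ∀ t ∈ Set.Ioo a b,
      H i t = (k (n - i) t * H (i - 2) t - deriv (H (i - 1)) t) *
        (ε (n - (i + 2)) * ε (n - (i + 1)) / k (n - (i + 1)) t))
    :
    (∀ t ∈ Set.Ioo a b,
      ∑ i ∈ Finset.Icc 1 (n - 2), ε (n - (i + 2)) * H i t * deriv (H i) t =
        ε 0 * H (n - 2) t * (deriv (H (n - 2)) t - k 1 t * H (n - 3) t)) ∧
    ((∀ t ∈ Set.Ioo a b,
        ∑ i ∈ Finset.Icc 1 (n - 2), ε (n - (i + 2)) * H i t * deriv (H i) t = 0) ↔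
      ∀ t ∈ Set.Ioo a b,
        H (n - 2) t * (deriv (H (n - 2)) t - k 1 t * H (n - 3) t) = 0) :=
  by
  have hε0 : ε 0 ≠ 0 := by rcases hε 0 with h | h <;> rw [h] <;> norm_num
  have main : ∀ t ∈ Set.Ioo a b,
      ∑ i ∈ Finset.Icc 1 (n - 2), ε (n - (i + 2)) * H i t * deriv (H i) t =
        ε 0 * H (n - 2) t * (deriv (H (n - 2)) t - k 1 t * H (n - 3) t) := by
    intro t ht
    set g : ℕ → ℝ := fun j => ε (n - (j + 2)) * k (n - (j + 1)) t * H (j - 1) t * H j t with hg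
    have key : ∀ j, 1 ≤ j → j ≤ n - 3 →
        ε (n - (j + 2)) * H j t * deriv (H j) t = g j - g (j + 1) := by
      intro j h1 h2
      have hrec := hHrec (j + 1) (by omega) (by omega) t ht
      have e1 : j + 1 - 2 = j - 1 := by omega
      have e2 : j + 1 - 1 = j := by omega
      have e3 : j + 1 + 2 = j + 3 := by omega
      have e4 : j + 1 + 1 = j + 2 := by omega
      rw [e1, e2, e3, e4] at hrec
      have hkpos := hk (n - (j + 2)) (by omega) (by omega) t ht
      have hc : k (n - (j + 2)) t ≠ 0 := ne_of_gt hkpos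
      have he1 : ε (n - (j + 3)) * ε (n - (j + 3)) = 1 := by
        rcases hε (n - (j + 3)) with h | h <;> rw [h] <;> norm_num
      have he2 : ε (n - (j + 2)) * ε (n - (j + 2)) = 1 := by
        rcases hε (n - (j + 2)) with h | h <;> rw [h] <;> norm_num
      have hD : deriv (H j) t = k (n - (j + 1)) t * H (j - 1) t
          - ε (n - (j + 3)) * ε (n - (j + 2)) * k (n - (j + 2)) t * H (j + 1) t := by
        field_simp at hrec
        linear_combination (ε (n - (j + 3)) * ε (n - (j + 2))) * hrec +
          (ε (n - (j + 2)) * ε (n - (j + 2)) *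
            (k (n - (j + 1)) t * H (j - 1) t - deriv (H j) t)) * he1 +
          ((k (n - (j + 1)) t * H (j - 1) t - deriv (H j) t)) * he2
      rw [hD]
      simp only [hg, e2, e3, e4]
      linear_combination
        (- H j t * ε (n - (j + 3)) * k (n - (j + 2)) t * H (j + 1) t) * he2
    have hsplit : n - 2 = (n - 3) + 1 := by omega
    have hsum : ∑ i ∈ Finset.Icc 1 (n - 2), ε (n - (i + 2)) * H i t * deriv (H i) t
        = (g 1 - g (n - 3 + 1)) +
          ε (n - (n - 3 + 1 + 2)) * H (n - 3 + 1) t * deriv (H (n - 3 + 1)) t := by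
      rw [hsplit, Finset.sum_Icc_succ_top (Nat.succ_le_succ (Nat.zero_le _)),
        tele_aux _ g _ key]
    rw [hsum]
    have i0 : n - 3 + 1 = n - 2 := by omega
    have i1 : n - (n - 3 + 1 + 2) = 0 := by omega
    have i2 : n - (n - 2 + 2) = 0 := by omega
    have i3 : n - (n - 2 + 1) = 1 := by omega
    have i4 : n - 2 - 1 = n - 3 := by omega
    have hg1 : g 1 = 0 := by simp [hg, hH0]
    have hgtop : g (n - 3 + 1) = ε 0 * k 1 t * H (n - 3) t * H (n - 2) t := by
      simp only [hg, i0, i2, i3, i4]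
    rw [hg1, hgtop, i1, i0]
    ring
  refine ⟨main, ?_, ?_⟩
  · intro h t ht
    have h2 : ε 0 * (H (n - 2) t * (deriv (H (n - 2)) t - k 1 t * H (n - 3) t)) = 0 := by
      rw [← mul_assoc, ← main t ht]; exact h t ht
    exact (mul_eq_zero.mp h2).resolve_left hε0
  · intro h t ht
    rw [main t ht, mul_assoc, h t ht, mul_zero]
end
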